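/- Let (τ_{i,j})_{i,j≥1} be nonnegative i.i.d. random variables. For any reals α > 0, β > 0 and integers K ≥ 1, N ≥ 1 and L ≥ K satisfying βK ≤ αL: E[(min_{1≤i≤L} ∑_{1≤j≤N} τ_{i,j})^β] ≤ N^{L+β} · (1 + (β/α) · E[(min_{1≤i≤K} τ_{i,1})^α]^{L/K}). -/

import Mathlib

open MeasureTheory ProbabilityTheory Filter ENNReal

noncomputable section

namespace FPP

/-- Vertices of the `d`-dimensional integer lattice. -/
abbrev V (d : ℕ) := Fin d → ℤ

/-- ℓ¹-distance on the lattice. -/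
def dist1 {d : ℕ} (x y : V d) : ℕ := ∑ i, (x i - y i).natAbs

/-- ℓ¹-norm on the lattice. -/
def norm1 {d : ℕ} (x : V d) : ℕ := ∑ i, (x i).natAbs

lemma dist1_symm {d : ℕ} (x y : V d) : dist1 x y = dist1 y x :=
  Finset.sum_congr rfl fun i _ => by omega

/-- The set of nearest-neighbour edges of the lattice, as unordered pairs of vertices. -/
def EdgeSet (d : ℕ) : Set (Sym2 (V d)) :=
  Sym2.fromRel (r := fun x y => dist1 x y = 1) ⟨fun _ _ h => by rwa [dist1_symm]⟩

/-- A lattice path: consecutive vertices are at ℓ¹-distance one. -/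
def IsLatticePath {d : ℕ} (p : List (V d)) : Prop :=
  p.Chain' fun a b => dist1 a b = 1

variable {d : ℕ} {Ω : Type*}

/-- The total weight of a path: the sum of the passage times of its edges. -/
def pathWeight (τ : Sym2 (V d) → Ω → ℝ) (ω : Ω) (p : List (V d)) : ℝ :=
  ((p.zip p.tail).map fun q => τ s(q.1, q.2) ω).sum

/-- The travel time between two vertices. -/
def T (τ : Sym2 (V d) → Ω → ℝ) (ω : Ω) (y z : V d) : ℝ :=
  sInf {c | ∃ p : List (V d), IsLatticePath p ∧ p.head? = some y ∧
    p.getLast? = some z ∧ pathWeight τ ω p = c}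

/-- The travel time between two vertex sets (infimum over lattice paths from `A` to `B`). -/
def TSet (τ : Sym2 (V d) → Ω → ℝ) (ω : Ω) (A B : Set (V d)) : ℝ :=
  sInf {c | ∃ p : List (V d), IsLatticePath p ∧ (∃ a ∈ A, p.head? = some a) ∧
    (∃ b ∈ B, p.getLast? = some b) ∧ pathWeight τ ω p = c}

/-- Point-to-set travel time `inf {T(y,z) : z ∈ A}`. -/
def TtoSet (τ : Sym2 (V d) → Ω → ℝ) (ω : Ω) (y : V d) (A : Set (V d)) : ℝ :=
  sInf {c | ∃ z ∈ A, T τ ω y z = c}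

/-- The travel time between `A` and `B` restricted to paths all of whose vertices lie in `S`. -/
def Tres (τ : Sym2 (V d) → Ω → ℝ) (ω : Ω) (S A B : Set (V d)) : ℝ :=
  sInf {c | ∃ p : List (V d), IsLatticePath p ∧ (∀ v ∈ p, v ∈ S) ∧
    (∃ a ∈ A, p.head? = some a) ∧ (∃ b ∈ B, p.getLast? = some b) ∧ pathWeight τ ω p = c}

/-- The standard basis vectors of the lattice. -/
def stdBasis (d : ℕ) (i : Fin d) : V d := fun j => if j = i then 1 else 0

/-- The minimum passage time among the `2d` edges incident to the origin. -/
def Ymin (τ : Sym2 (V d) → Ω → ℝ) (ω : Ω) : ℝ :=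
  sInf {x | ∃ i : Fin d, x = τ s(0, stdBasis d i) ω ∨ x = τ s(0, -stdBasis d i) ω}

/-- The passage times are measurable, nonnegative, independent and identically distributed. -/
def IID [MeasurableSpace Ω] (τ : Sym2 (V d) → Ω → ℝ) (P : Measure Ω) : Prop :=
  (∀ e, Measurable (τ e)) ∧ (∀ e ω, 0 ≤ τ e ω) ∧
    iIndepFun (fun e : EdgeSet d => τ e.1) P ∧
    ∀ e e' : EdgeSet d, IdentDistrib (τ e.1) (τ e'.1) P P

/-- `μZ` is the time constant: it is nonnegative and `T(0,nz)/n → μZ z` in probability. -/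
def IsTimeConstant [MeasurableSpace Ω] (τ : Sym2 (V d) → Ω → ℝ) (P : Measure Ω)
    (μZ : V d → ℝ) : Prop :=
  (∀ z, 0 ≤ μZ z) ∧
    ∀ z : V d, TendstoInMeasure P (fun (n : ℕ) ω => T τ ω 0 (n • z) / n) atTop fun _ => μZ z

/-- `E[Y^α]`, as a Lebesgue integral with values in `[0,∞]`. -/
def momY [MeasurableSpace Ω] (τ : Sym2 (V d) → Ω → ℝ) (P : Measure Ω) (α : ℝ) : ℝ≥0∞ :=
  ∫⁻ ω, ENNReal.ofReal (Ymin τ ω ^ α) ∂P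

/-- Embedding of the lattice into Euclidean space. -/
def toE {d : ℕ} (x : V d) : EuclideanSpace ℝ (Fin d) := WithLp.toLp 2 fun i => (x i : ℝ)

/-- The cylinder of Euclidean radius `r` around the line `ℝz`. -/
def cyl (z : V d) (r : ℝ) : Set (V d) :=
  {y | Metric.infDist (toE y) (Set.range fun a : ℝ => a • toE z) ≤ r}

/-- The hyperplane of vertices with coordinate sum `k`. -/
def Hplane (d : ℕ) (k : ℤ) : Set (V d) := {y | ∑ i, y i = k}

/-- The section `V_n(z,r)` of the cylinder. -/
def Vsec (z : V d) (r : ℝ) (n : ℕ) : Set (V d) := cyl z r ∩ Hplane d (n * norm1 z)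

/-- The set of edges `E_n(z,r)` joining `C(z,r) ∩ H_{n‖z‖-1}` to `C(z,r) ∩ H_{n‖z‖}`. -/
def Esec (z : V d) (r : ℝ) (n : ℕ) : Set (Sym2 (V d)) :=
  {e | ∃ a b : V d, e = s(a, b) ∧ dist1 a b = 1 ∧ a ∈ cyl z r ∧ b ∈ cyl z r ∧
    (∑ i, a i) = (n * norm1 z : ℕ) - 1 ∧ (∑ i, b i) = (n * norm1 z : ℕ)}

/-- The event `A_n(z,r)`: all edges of `E_n(z,r)` have passage time at most `tbar`. -/
def Asec (τ : Sym2 (V d) → Ω → ℝ) (z : V d) (r tbar : ℝ) (n : ℕ) (ω : Ω) : Prop :=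
  ∀ e ∈ Esec z r n, τ e ω ≤ tbar

/-- The regeneration times `ρ_j(z,r)`. -/
def rho (τ : Sym2 (V d) → Ω → ℝ) (z : V d) (r tbar : ℝ) (ω : Ω) : ℕ → ℕ
  | 0 => 0
  | j + 1 => sInf {n : ℕ | rho τ z r tbar ω j < n ∧ Asec τ z r tbar n ω}

/-- The cylinder time constant `μ_{C(z,r)} = lim E[T_{C(z,r)}(V_0,V_n)]/n`, in `[0,∞]`. -/
def muCyl [MeasurableSpace Ω] (τ : Sym2 (V d) → Ω → ℝ) (P : Measure Ω) (z : V d) (r : ℝ) :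
    ℝ≥0∞ :=
  atTop.liminf fun n : ℕ =>
    (∫⁻ ω, ENNReal.ofReal (Tres τ ω (cyl z r) (Vsec z r 0) (Vsec z r n)) ∂P) / n

/-- The set `Z_ε` of sites experiencing a linear order deviation. -/
def Zset (τ : Sym2 (V d) → Ω → ℝ) (μZ : V d → ℝ) (ε : ℝ) (ω : Ω) : Set (V d) :=
  {z | ε * norm1 z < |T τ ω 0 z - μZ z|}

/-- The ball `B_t` of sites reached from the origin by time `t`. -/
def Bt (τ : Sym2 (V d) → Ω → ℝ) (ω : Ω) (t : ℝ) : Set (V d) := {z | T τ ω 0 z ≤ t}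

/-- The discrete ball `B^μ_t` of the time constant. -/
def Bmu (μZ : V d → ℝ) (t : ℝ) : Set (V d) := {z | μZ z ≤ t}

/-- The set `T_ε` of times at which one of the shape theorem inclusions fails. -/
def TEps (τ : Sym2 (V d) → Ω → ℝ) (μZ : V d → ℝ) (ε : ℝ) (ω : Ω) : Set ℝ :=
  {t | 0 ≤ t ∧ (¬ Bmu μZ ((1 - ε) * t) ⊆ Bt τ ω t ∨ ¬ Bt τ ω t ⊆ Bmu μZ ((1 + ε) * t))}

end FPP

/-!
Let `Y = min_{i<L} (∑_{j<N} τ_{i,j}) / N`, `m = min_{i<K} τ_{i,0}` and `p = L / K ≥ 1`. If `Y > t`,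
every row `i < L` has an entry `τ_{i,φ(i)} > t`; a union bound over the `N ^ L` choices of `φ` and
independence give `P(Y > t) ≤ N ^ L P(τ > t) ^ L = N ^ L P(m > t) ^ p`. In the layer-cake formula
for `E[Y ^ (α p)]` the surplus factor `(t ^ α P(m > t)) ^ (p - 1)` is at most `E[m ^ α] ^ (p - 1)`
by Markov, so `E[Y ^ (α p)] ≤ p N ^ L E[m ^ α] ^ p`. Since `θ = β / (α p) ≤ 1`, Bernoulli's
inequality `x ^ θ ≤ 1 + θ x` applied to `x = Y ^ (α p)` concludes, after scaling by `N ^ β`.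
-/

open Finset

theorem Finset.measurable_inf' {δ α ι : Type*} [MeasurableSpace δ] [MeasurableSpace α]
    [SemilatticeInf α] [MeasurableInf₂ α] {s : Finset ι} (hs : s.Nonempty) {f : ι → δ → α}
    (hf : ∀ i ∈ s, Measurable (f i)) : Measurable fun x => s.inf' hs fun i => f i x := by
  simpa only [← Finset.inf'_apply] using
    Finset.inf'_induction hs f (fun _ hf _ hg => hf.inf hg) hf

theorem csInf_exists_lt_eq_inf'_range {α : Type*} [ConditionallyCompleteLinearOrder α] {n : ℕ}
    (hn : (range n).Nonempty) (f : ℕ → α) :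
    sInf {x | ∃ i < n, x = f i} = (range n).inf' hn f := by
  rw [inf'_eq_csInf_image]
  congr 1
  ext x
  simp [eq_comm]

theorem Real.rpow_le_one_add_mul_self {x θ : ℝ} (hx : 0 ≤ x) (hθ0 : 0 ≤ θ) (hθ1 : θ ≤ 1) :
    x ^ θ ≤ 1 + θ * x := by
  have := rpow_one_add_le_one_add_mul_self (s := x - 1) (by linarith) hθ0 hθ1
  rw [add_sub_cancel] at this
  nlinarith

section Moments

variable {Ω : Type*} [MeasurableSpace Ω] {μ : Measure Ω}

theorem lintegral_ofReal_rpow_eq_mul_lintegral_div {S : Ω → ℝ} (hS : ∀ ω, 0 ≤ S ω) {c : ℝ}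
    (hc : 0 < c) (β : ℝ) :
    ∫⁻ ω, ENNReal.ofReal (S ω ^ β) ∂μ =
      ENNReal.ofReal c ^ β * ∫⁻ ω, ENNReal.ofReal ((S ω / c) ^ β) ∂μ := by
  rw [← lintegral_const_mul' _ _ (by finiteness)]
  refine lintegral_congr fun ω => ?_
  rw [ENNReal.ofReal_rpow_of_pos hc, ← ENNReal.ofReal_mul (by positivity),
    ← Real.mul_rpow hc.le (div_nonneg (hS ω) hc.le), mul_div_cancel₀ _ hc.ne']

theorem lintegral_rpow_mul_le_one_add_mul [IsProbabilityMeasure μ] {Y : Ω → ℝ}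
    (hY : ∀ ω, 0 ≤ Y ω) {θ : ℝ} (hθ0 : 0 ≤ θ) (hθ1 : θ ≤ 1) (r : ℝ) :
    ∫⁻ ω, ENNReal.ofReal (Y ω ^ (θ * r)) ∂μ ≤
      1 + ENNReal.ofReal θ * ∫⁻ ω, ENNReal.ofReal (Y ω ^ r) ∂μ := by
  calc ∫⁻ ω, ENNReal.ofReal (Y ω ^ (θ * r)) ∂μ
      ≤ ∫⁻ ω, 1 + ENNReal.ofReal θ * ENNReal.ofReal (Y ω ^ r) ∂μ := by
        refine lintegral_mono fun ω => ?_
        have hYr : 0 ≤ Y ω ^ r := Real.rpow_nonneg (hY ω) r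
        rw [mul_comm θ, Real.rpow_mul (hY ω), ← ENNReal.ofReal_mul hθ0, ← ENNReal.ofReal_one,
          ← ENNReal.ofReal_add zero_le_one (by positivity)]
        exact ENNReal.ofReal_le_ofReal (Real.rpow_le_one_add_mul_self hYr hθ0 hθ1)
    _ = 1 + ENNReal.ofReal θ * ∫⁻ ω, ENNReal.ofReal (Y ω ^ r) ∂μ := by
        rw [lintegral_add_left measurable_const, lintegral_const_mul' _ _ ofReal_ne_top,
          lintegral_one, measure_univ]

theorem mul_meas_lt_le_lintegral_rpow {X : Ω → ℝ} (hX : AEMeasurable X μ) {α t : ℝ}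
    (hα : 0 ≤ α) (ht : 0 ≤ t) :
    ENNReal.ofReal (t ^ α) * μ {ω | t < X ω} ≤ ∫⁻ ω, ENNReal.ofReal (X ω ^ α) ∂μ := by
  refine le_trans (mul_le_mul_right (measure_mono fun ω (hω : t < X ω) => ?_) _)
    (mul_meas_ge_le_lintegral₀ (hX.pow_const α).ennreal_ofReal _)
  exact ENNReal.ofReal_le_ofReal (Real.rpow_le_rpow ht hω.le hα)

theorem lintegral_rpow_mul_le_of_meas_lt_le {Ω' : Type*} [MeasurableSpace Ω'] {ν : Measure Ω'}
    {X : Ω → ℝ} {Y : Ω' → ℝ} (hX0 : 0 ≤ᵐ[μ] X) (hX : AEMeasurable X μ) (hY0 : 0 ≤ᵐ[ν] Y)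
    (hY : AEMeasurable Y ν) {α p : ℝ} (hα : 0 < α) (hp : 1 ≤ p) {C : ℝ≥0∞}
    (htail : ∀ t > 0, ν {ω | t < Y ω} ≤ C * μ {ω | t < X ω} ^ p) :
    ∫⁻ ω, ENNReal.ofReal (Y ω ^ (α * p)) ∂ν ≤
      ENNReal.ofReal p * C * (∫⁻ ω, ENNReal.ofReal (X ω ^ α) ∂μ) ^ p := by
  set A := ∫⁻ ω, ENNReal.ofReal (X ω ^ α) ∂μ
  have hp0 : 0 ≤ p - 1 := by linarith
  -- Markov's inequality `t ^ α μ {t < X} ≤ A` absorbs the surplus power `p - 1`.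
  have hpointwise : ∀ t > 0, ν {ω | t < Y ω} * ENNReal.ofReal (t ^ (α * p - 1)) ≤
      C * A ^ (p - 1) * (μ {ω | t < X ω} * ENNReal.ofReal (t ^ (α - 1))) := by
    intro t ht
    have hsplit : ENNReal.ofReal (t ^ (α * p - 1)) =
        ENNReal.ofReal (t ^ α) ^ (p - 1) * ENNReal.ofReal (t ^ (α - 1)) := by
      rw [ENNReal.ofReal_rpow_of_nonneg (by positivity) hp0, ← Real.rpow_mul ht.le,
        ← ENNReal.ofReal_mul (by positivity), ← Real.rpow_add ht]
      ring_nf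
    have hmarkov := ENNReal.rpow_le_rpow (mul_meas_lt_le_lintegral_rpow hX hα.le ht.le) hp0
    calc ν {ω | t < Y ω} * ENNReal.ofReal (t ^ (α * p - 1))
        ≤ C * μ {ω | t < X ω} ^ (p - 1 + 1) * ENNReal.ofReal (t ^ (α * p - 1)) := by
          rw [sub_add_cancel]; gcongr; exact htail t ht
      _ = C * (ENNReal.ofReal (t ^ α) * μ {ω | t < X ω}) ^ (p - 1) *
            (μ {ω | t < X ω} * ENNReal.ofReal (t ^ (α - 1))) := by
          rw [ENNReal.rpow_add_of_nonneg _ _ hp0 zero_le_one, ENNReal.rpow_one,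
            ENNReal.mul_rpow_of_nonneg _ _ hp0, hsplit]
          ring
      _ ≤ C * A ^ (p - 1) * (μ {ω | t < X ω} * ENNReal.ofReal (t ^ (α - 1))) := by
          gcongr
  have htail_meas : Measurable fun t : ℝ => μ {ω | t < X ω} * ENNReal.ofReal (t ^ (α - 1)) :=
    (Antitone.measurable fun s t hst => measure_mono fun ω (h : t < X ω) => hst.trans_lt h).mul
      (measurable_id.pow_const _).ennreal_ofReal
  have hAp : A ^ p = A ^ (p - 1) * A := by
    conv_lhs => rw [← sub_add_cancel p 1]
    rw [ENNReal.rpow_add_of_nonneg _ _ hp0 zero_le_one, ENNReal.rpow_one]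
  calc ∫⁻ ω, ENNReal.ofReal (Y ω ^ (α * p)) ∂ν
      = ENNReal.ofReal (α * p) *
          ∫⁻ t in Set.Ioi 0, ν {ω | t < Y ω} * ENNReal.ofReal (t ^ (α * p - 1)) :=
        lintegral_rpow_eq_lintegral_meas_lt_mul ν hY0 hY (by positivity)
    _ ≤ ENNReal.ofReal (α * p) * ∫⁻ t in Set.Ioi 0,
          C * A ^ (p - 1) * (μ {ω | t < X ω} * ENNReal.ofReal (t ^ (α - 1))) := by
        gcongr ENNReal.ofReal (α * p) * ?_
        exact setLIntegral_mono (by fun_prop) hpointwise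
    _ = ENNReal.ofReal p * C * A ^ (p - 1) * (ENNReal.ofReal α *
          ∫⁻ t in Set.Ioi 0, μ {ω | t < X ω} * ENNReal.ofReal (t ^ (α - 1))) := by
        rw [lintegral_const_mul _ htail_meas, ENNReal.ofReal_mul hα.le]
        ring
    _ = ENNReal.ofReal p * C * A ^ p := by
        rw [← lintegral_rpow_eq_lintegral_meas_lt_mul μ hX0 hX hα, hAp]
        ring

end Moments

theorem ProbabilityTheory.iIndepFun.measure_forall_lt_eq_pow {Ω ι : Type*} [MeasurableSpace Ω]
    {μ : Measure Ω} {X : ι → Ω → ℝ} (hindep : iIndepFun X μ) {i₀ : ι}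
    (hident : ∀ i, IdentDistrib (X i) (X i₀) μ μ) (s : Finset ι) (t : ℝ) :
    μ {ω | ∀ i ∈ s, t < X i ω} = μ {ω | t < X i₀ ω} ^ s.card := by
  have hset : {ω | ∀ i ∈ s, t < X i ω} = ⋂ i ∈ s, X i ⁻¹' Set.Ioi t := by ext; simp
  rw [hset, hindep.meas_biInter fun i _ => ⟨Set.Ioi t, measurableSet_Ioi, rfl⟩, ← prod_const]
  exact prod_congr rfl fun i _ => (hident i).measure_mem_eq measurableSet_Ioi

section RowMinima

variable {Ω : Type*} [MeasurableSpace Ω] {μ : Measure Ω} {τ : ℕ → ℕ → Ω → ℝ} {p₀ : ℕ × ℕ}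

theorem measure_lt_inf'_column_eq_pow (hindep : iIndepFun (fun p : ℕ × ℕ => τ p.1 p.2) μ)
    (hident : ∀ p : ℕ × ℕ, IdentDistrib (τ p.1 p.2) (τ p₀.1 p₀.2) μ μ)
    {K : ℕ} (hK : (range K).Nonempty) (j : ℕ) (t : ℝ) :
    μ {ω | t < (range K).inf' hK fun i => τ i j ω} = μ {ω | t < τ p₀.1 p₀.2 ω} ^ K := by
  simpa using
    hindep.measure_forall_lt_eq_pow hident ((range K).map (Function.Embedding.sectL ℕ j)) t

theorem measure_lt_inf'_sum_div_le (hindep : iIndepFun (fun p : ℕ × ℕ => τ p.1 p.2) μ)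
    (hident : ∀ p : ℕ × ℕ, IdentDistrib (τ p.1 p.2) (τ p₀.1 p₀.2) μ μ)
    {L N : ℕ} (hL : (range L).Nonempty) (hN : 0 < N) (t : ℝ) :
    μ {ω | t < ((range L).inf' hL fun i => ∑ j ∈ range N, τ i j ω) / N} ≤
      N ^ L * μ {ω | t < τ p₀.1 p₀.2 ω} ^ L := by
  let cells (φ : Fin L → Fin N) : Fin L ↪ ℕ × ℕ :=
    ⟨fun i => (i, φ i), fun i i' h => Fin.ext (congrArg Prod.fst h)⟩
  have hcover : {ω | t < ((range L).inf' hL fun i => ∑ j ∈ range N, τ i j ω) / N}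
      ⊆ ⋃ φ : Fin L → Fin N, {ω | ∀ p ∈ univ.map (cells φ), t < τ p.1 p.2 ω} := by
    intro ω hω
    rw [Set.mem_ofPred_eq, lt_div_iff₀ (by exact_mod_cast hN), lt_inf'_iff] at hω
    have hrow : ∀ i : Fin L, ∃ j : Fin N, t < τ i j ω := by
      intro i
      have hsum : ∑ _j ∈ range N, t < ∑ j ∈ range N, τ i j ω := by
        simpa [mul_comm] using hω i (mem_range.2 i.2)
      obtain ⟨j, hj, htj⟩ := exists_lt_of_sum_lt hsum
      exact ⟨⟨j, mem_range.1 hj⟩, htj⟩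
    choose φ hφ using hrow
    simpa [cells] using ⟨φ, hφ⟩
  calc _ ≤ ∑ φ : Fin L → Fin N, μ {ω | ∀ p ∈ univ.map (cells φ), t < τ p.1 p.2 ω} :=
        (measure_mono hcover).trans (measure_iUnion_fintype_le _ _)
    _ = N ^ L * μ {ω | t < τ p₀.1 p₀.2 ω} ^ L := by
        simp only [hindep.measure_forall_lt_eq_pow hident, card_map, card_univ, Fintype.card_fin,
          sum_const, Fintype.card_fun, nsmul_eq_mul, Nat.cast_pow]

theorem lintegral_inf'_sum_div_rpow_le (hmeas : ∀ i j, Measurable (τ i j))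
    (h0 : ∀ i j ω, 0 ≤ τ i j ω) (hindep : iIndepFun (fun p : ℕ × ℕ => τ p.1 p.2) μ)
    (hident : ∀ p : ℕ × ℕ, IdentDistrib (τ p.1 p.2) (τ p₀.1 p₀.2) μ μ) {α : ℝ} (hα : 0 < α)
    {K L N : ℕ} (hK : (range K).Nonempty) (hL : (range L).Nonempty) (hN : 0 < N)
    (hKL : K ≤ L) (j₀ : ℕ) :
    ∫⁻ ω, ENNReal.ofReal ((((range L).inf' hL fun i => ∑ j ∈ range N, τ i j ω) / N) ^
        (α * (L / K))) ∂μ ≤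
      ENNReal.ofReal (L / K) * N ^ L *
        (∫⁻ ω, ENNReal.ofReal (((range K).inf' hK fun i => τ i j₀ ω) ^ α) ∂μ) ^ ((L : ℝ) / K) := by
  have hKpos : (0 : ℝ) < K := by exact_mod_cast card_range K ▸ hK.card_pos
  refine lintegral_rpow_mul_le_of_meas_lt_le
    (ae_of_all _ fun ω => le_inf' _ _ fun i _ => h0 i j₀ ω)
    (Finset.measurable_inf' hK fun i _ => hmeas i j₀).aemeasurable
    (ae_of_all _ fun ω => div_nonneg (le_inf' _ _ fun i _ => sum_nonneg fun j _ => h0 i j ω)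
      (Nat.cast_nonneg N))
    ((Finset.measurable_inf' hL fun i _ => measurable_sum _ fun j _ => hmeas i j).div_const
      _).aemeasurable
    hα ((one_le_div hKpos).2 (by exact_mod_cast hKL)) fun t _ => ?_
  rw [measure_lt_inf'_column_eq_pow hindep hident hK, ← ENNReal.rpow_natCast _ K,
    ← ENNReal.rpow_mul, mul_div_cancel₀ _ hKpos.ne', ENNReal.rpow_natCast]
  exact measure_lt_inf'_sum_div_le hindep hident hL hN t

end RowMinima

/-- **Lemma (moment comparison for minima of sums).** For nonnegative i.i.d. `τ_{i,j}` and
`β K ≤ α L` with `1 ≤ K ≤ L`, `1 ≤ N`: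
`E[(min_{i<L} ∑_{j<N} τ_{i,j})^β] ≤ N^{L+β} (1 + (β/α) E[(min_{i<K} τ_{i,1})^α]^{L/K})`. -/
theorem min_sum_moment_comparison {Ω : Type*} [MeasurableSpace Ω]
    (P : Measure Ω) [IsProbabilityMeasure P]
    (τ : ℕ → ℕ → Ω → ℝ) (hmeas : ∀ i j, Measurable (τ i j)) (h0 : ∀ i j ω, 0 ≤ τ i j ω)
    (hindep : ProbabilityTheory.iIndepFun
      (fun p : ℕ × ℕ => τ p.1 p.2) P)
    (hident : ∀ p p' : ℕ × ℕ, ProbabilityTheory.IdentDistrib (τ p.1 p.2) (τ p'.1 p'.2) P P)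
    (α β : ℝ) (hα : 0 < α) (hβ : 0 < β)
    (K N L : ℕ) (hK : 1 ≤ K) (hN : 1 ≤ N) (hKL : K ≤ L) (h : β * K ≤ α * L) :
    ∫⁻ ω, ENNReal.ofReal (sInf {x | ∃ i < L, x = ∑ j ∈ Finset.range N, τ i j ω} ^ β) ∂P ≤
      (N : ℝ≥0∞) ^ ((L : ℝ) + β) *
        (1 + ENNReal.ofReal (β / α) *
          (∫⁻ ω, ENNReal.ofReal (sInf {x | ∃ i < K, x = τ i 0 ω} ^ α) ∂P) ^ ((L : ℝ) / K)) := by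
  have hKpos : (0 : ℝ) < K := by exact_mod_cast hK
  have hNpos : (0 : ℝ) < N := by exact_mod_cast hN
  have hKne : (range K).Nonempty := nonempty_range_iff.2 (by omega)
  have hLne : (range L).Nonempty := nonempty_range_iff.2 (by omega)
  set p : ℝ := L / K
  have hp : 0 < p := div_pos (by exact_mod_cast hKL.trans_lt' hK) hKpos
  set θ := β / (α * p)
  have hθ1 : θ ≤ 1 := by
    rw [div_le_one (mul_pos hα hp), ← mul_div_assoc, le_div_iff₀ hKpos]; exact h
  have hθp : ENNReal.ofReal θ * ENNReal.ofReal p = ENNReal.ofReal (β / α) := by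
    rw [← ENNReal.ofReal_mul (by positivity), div_mul_eq_mul_div, mul_div_mul_right _ _ hp.ne']
  simp_rw [csInf_exists_lt_eq_inf'_range hLne, csInf_exists_lt_eq_inf'_range hKne]
  set A := ∫⁻ ω, ENNReal.ofReal (((range K).inf' hKne fun i => τ i 0 ω) ^ α) ∂P
  have hS0 : ∀ ω, 0 ≤ (range L).inf' hLne fun i => ∑ j ∈ range N, τ i j ω :=
    fun ω => le_inf' _ _ fun i _ => sum_nonneg fun j _ => h0 i j ω
  have hbernoulli := lintegral_rpow_mul_le_one_add_mul (μ := P)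
    (fun ω => div_nonneg (hS0 ω) hNpos.le) (by positivity) hθ1 (α * p)
  rw [div_mul_cancel₀ β (mul_pos hα hp).ne'] at hbernoulli
  have hmoment := lintegral_inf'_sum_div_rpow_le hmeas h0 hindep (fun q => hident q (0, 0)) hα
    hKne hLne hN hKL 0
  rw [lintegral_ofReal_rpow_eq_mul_lintegral_div hS0 hNpos, ENNReal.ofReal_natCast]
  calc _ ≤ (N : ℝ≥0∞) ^ β * (1 + ENNReal.ofReal θ * (ENNReal.ofReal p * N ^ L * A ^ p)) := by
        gcongr
        exact hbernoulli.trans (by gcongr)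
    _ = (N : ℝ≥0∞) ^ β * (1 + N ^ L * (ENNReal.ofReal (β / α) * A ^ p)) := by
        rw [← hθp]; ring
    _ ≤ (N : ℝ≥0∞) ^ β * (N ^ L * (1 + ENNReal.ofReal (β / α) * A ^ p)) := by
        gcongr _ * ?_
        rw [mul_add, mul_one]
        gcongr
        exact one_le_pow₀ (by exact_mod_cast hN)
    _ = _ := by
        rw [ENNReal.rpow_add _ _ (by simp; omega) (by simp), ENNReal.rpow_natCast]
        ring
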